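/- Let b : ℕ → ℕ satisfy b(2k) = b(8n + 4 - 2k) for all 0 ≤ k ≤ 2n+1, and suppose b(2) + b(6) + ... + b(4n-2) > b(4) + b(8) + ... + b(4n). Then b(0) + b(4) + ... + b(4n) + b(4n+4) + ... + b(8n) < b(0) + b(2) + ... + b(4n). -/
import Mathlib

/-- Dimension count for the case `dim M = 8n + 4`: if `b` satisfies Poincaré duality
`b (2k) = b (8n + 4 - 2k)` and `b 2 + b 6 + ... + b (4n-2) > b 4 + ... + b (4n)`, then
`b 0 + b 4 + ... + b (4n) + b (4n+4) + ... + b (8n) < b 0 + b 2 + ... + b (4n)`. -/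
theorem stmt_3 (n : ℕ) (b : ℕ → ℕ)
    (hsym : ∀ k ≤ 2 * n + 1, b (2 * k) = b (8 * n + 4 - 2 * k))
    (hass : ∑ i ∈ Finset.range n, b (4 + 4 * i) < ∑ i ∈ Finset.range n, b (2 + 4 * i)) :
    ∑ i ∈ Finset.range (2 * n + 1), b (4 * i) <
      ∑ i ∈ Finset.range (2 * n + 1), b (2 * i) := by
  have split1 : ∀ m : ℕ, ∑ i ∈ Finset.range (2 * m + 1), b (2 * i)
      = ∑ i ∈ Finset.range (m + 1), b (4 * i) + ∑ i ∈ Finset.range m, b (2 + 4 * i) := by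
    intro m
    induction m with
    | zero => simp
    | succ m ih =>
      have h : 2 * (m + 1) + 1 = (2 * m + 1) + 1 + 1 := by ring
      rw [h, Finset.sum_range_succ, Finset.sum_range_succ, ih,
        Finset.sum_range_succ (fun i => b (4 * i)) (m + 1),
        Finset.sum_range_succ (fun i => b (2 + 4 * i)) m]
      have e1 : 2 * (2 * m + 1) = 2 + 4 * m := by ring
      have e2 : 2 * (2 * m + 1 + 1) = 4 * (m + 1) := by ring
      rw [e1, e2]; ring
  have split2 : ∑ i ∈ Finset.range (2 * n + 1), b (4 * i)
      = ∑ i ∈ Finset.range (n + 1), b (4 * i) + ∑ i ∈ Finset.range n, b (4 * (n + 1 + i)) := by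
    have h : 2 * n + 1 = (n + 1) + n := by omega
    rw [h, Finset.sum_range_add]
  have tail : ∑ i ∈ Finset.range n, b (4 * (n + 1 + i)) = ∑ i ∈ Finset.range n, b (4 + 4 * i) := by
    have h1 : ∀ i ∈ Finset.range n, b (4 * (n + 1 + i)) = b (4 + 4 * (n - 1 - i)) := by
      intro i hi
      simp only [Finset.mem_range] at hi
      have h := hsym (2 * n - 2 * i) (by omega)
      have e1 : 2 * (2 * n - 2 * i) = 4 + 4 * (n - 1 - i) := by omega
      rw [e1] at h
      have e2 : 8 * n + 4 - (4 + 4 * (n - 1 - i)) = 4 * (n + 1 + i) := by omega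
      rw [e2] at h
      exact h.symm
    rw [Finset.sum_congr rfl h1, Finset.sum_range_reflect (fun i => b (4 + 4 * i)) n]
  rw [split2, tail, split1 n]
  omega
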